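/- For complex numbers z₁, z₂ with |z₁| > |z₂| > 0, and z₀ = z₁ - z₂, the identity z₁⁻¹δ((x₀ - x₁)/z₁) · x₂⁻¹δ((x₀ - z₂)/x₂) = x₀⁻¹δ((z₁ + x₁)/x₀) · x₂⁻¹δ((z₀ + x₁)/x₂) holds, where the left-hand side converges absolutely in the sense that the coefficient of each monomial in x₀, x₁, x₂ is an absolutely convergent series in z₁ and z₂, while the right-hand side requires no convergence condition. -/

import Mathlib

/-!
Put `a = -e₀ - 1`, `b = -e₂ - 1` and `n = e₀ + e₂ + 1 + J + k`; the left-hand terms vanish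
for `k < 0`. Upper negation turns `C(n, J) (-1)^J` into `C(a + b - k, J)`, and Chu–Vandermonde
together with `C(b - k, i) C(b, k) = C(b, i) C(b - i, k)` turns the `k`-th term into
`z₁^(a + b - J) ∑_{i ≤ J} C(a, J - i) C(b, i) C(b - i, k) w^k` with `w = -z₂/z₁`. Since
`|w| < 1`, each binomial series `∑_k C(b - i, k) w^k` converges absolutely to
`(1 + w)^(b - i) = ((z₁ - z₂)/z₁)^(b - i)`, which gives the right-hand side term by term.
-/

/-- Generalized binomial coefficient `C(n, j)` for `n ∈ ℤ`, `j ∈ ℕ`, as a complex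
number: `n(n-1)⋯(n-j+1)/j!`. -/
noncomputable def genChoose (n : ℤ) (j : ℕ) : ℂ :=
  (∏ i ∈ Finset.range j, ((n : ℂ) - (i : ℂ))) / (Nat.factorial j : ℂ)

/-- The `n`-th term (`n ∈ ℤ` indexing the first delta function) of the series giving
the coefficient of `x₀^e₀ x₁^J x₂^e₂` in the product
`z₁⁻¹δ((x₀ - x₁)/z₁) · x₂⁻¹δ((x₀ - z₂)/x₂)`, where `(x₀ - x₁)^n` is expanded in
nonnegative powers of `x₁` and `(x₀ - z₂)^k` in nonnegative powers of `z₂`. -/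
noncomputable def lhsSubstTerm (z₁ z₂ : ℂ) (e₀ e₂ : ℤ) (J : ℕ) (n : ℤ) : ℂ :=
  if 0 ≤ -e₂ - 1 - e₀ + n - (J : ℤ) then
    genChoose n J * (-1) ^ J * z₁ ^ (-n - 1) *
      genChoose (-e₂ - 1) ((-e₂ - 1 - e₀ + n - (J : ℤ)).toNat) *
      (-z₂) ^ ((-e₂ - 1 - e₀ + n - (J : ℤ)).toNat)
  else 0

/-- The coefficient of `x₀^e₀ x₁^J x₂^e₂` in
`x₀⁻¹δ((z₁ + x₁)/x₀) · x₂⁻¹δ((z₀ + x₁)/x₂)` with `z₀ = z₁ - z₂`, where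
`(z₁ + x₁)^n` and `(z₀ + x₁)^m` are expanded in nonnegative powers of `x₁`;
this is a finite sum, requiring no convergence condition. -/
noncomputable def rhsSubstCoeff (z₁ z₂ : ℂ) (e₀ e₂ : ℤ) (J : ℕ) : ℂ :=
  ∑ j ∈ Finset.range (J + 1),
    genChoose (-e₀ - 1) j * z₁ ^ (-e₀ - 1 - (j : ℤ)) *
      genChoose (-e₂ - 1) (J - j) * (z₁ - z₂) ^ (-e₂ - 1 - ((J - j : ℕ) : ℤ))


theorem genChoose_eq_choose (n : ℤ) (j : ℕ) : genChoose n j = Ring.choose (n : ℂ) j := by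
  rw [genChoose, Ring.choose_eq_smul, ← Polynomial.aeval_eq_smeval, Polynomial.aeval_def,
    Polynomial.eval₂_eq_eval_map, algebraMap_int_eq, descPochhammer_map,
    descPochhammer_eval_eq_prod_range, smul_eq_mul, inv_mul_eq_div]

namespace Ring

variable {R : Type*} [CommRing R] [BinomialRing R]

theorem choose_mul_neg_one_pow (r : R) (n : ℕ) :
    choose r n * (-1) ^ n = choose (n - 1 - r) n := by
  have h := choose_neg (-r) n
  rw [neg_neg, Units.smul_def, Int.coe_negOnePow_natCast, zsmul_eq_mul, Int.cast_pow,
    Int.cast_neg, Int.cast_one] at h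
  rw [h, mul_comm, ← mul_assoc, ← mul_pow, neg_one_mul, neg_neg, one_pow, one_mul]
  congr 1
  ring

theorem choose_mul_choose_sub_comm (r : R) (k i : ℕ) :
    choose r k * choose (r - k) i = choose r i * choose (r - i) k := by
  have h₁ := choose_smul_choose r (Nat.le_add_right k i)
  have h₂ := choose_smul_choose r (Nat.le_add_left i k)
  rw [Nat.add_sub_cancel_left] at h₁
  rw [Nat.add_sub_cancel, ← Nat.choose_symm_add] at h₂
  rw [← h₁, ← h₂]

theorem choose_add_sub_mul_choose (a b : R) (J k : ℕ) :
    choose (a + b - k) J * choose b k =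
      ∑ j ∈ Finset.range (J + 1), choose a j * choose b (J - j) * choose (b - (J - j : ℕ)) k := by
  rw [add_sub_assoc, add_choose_eq J (Commute.all a _),
    Finset.Nat.sum_antidiagonal_eq_sum_range_succ_mk, Finset.sum_mul]
  refine Finset.sum_congr rfl fun j _ => ?_
  rw [mul_assoc, mul_comm (choose (b - k) _), choose_mul_choose_sub_comm, mul_assoc]

end Ring

namespace Complex

theorem hasSum_choose_mul_pow (a : ℂ) {w : ℂ} (hw : ‖w‖ < 1) :
    HasSum (fun k : ℕ => Ring.choose a k * w ^ k) ((1 + w) ^ a) := by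
  have hw' : w ∈ Metric.eball (0 : ℂ) 1 := by
    rw [mem_eball_zero_iff, ← ENNReal.coe_one, enorm_lt_coe]; exact_mod_cast hw
  simpa [binomialSeries, FormalMultilinearSeries.ofScalars_apply_eq, mul_comm] using
    one_add_cpow_hasFPowerSeriesOnBall_zero.hasSum hw'

theorem summable_norm_choose_mul_pow (a : ℂ) {w : ℂ} (hw : ‖w‖ < 1) :
    Summable (fun k : ℕ => ‖Ring.choose a k * w ^ k‖) := by
  have hw' : w ∈ Metric.eball (0 : ℂ) (binomialSeries ℂ a).radius := by
    refine lt_of_lt_of_le ?_ binomialSeries_radius_ge_one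
    rw [edist_zero_right, ← ENNReal.coe_one, enorm_lt_coe]; exact_mod_cast hw
  simpa [binomialSeries, FormalMultilinearSeries.ofScalars_apply_eq, mul_comm] using
    (binomialSeries ℂ a).summable_norm_apply hw'

end Complex

theorem hasSum_int_iff_hasSum_nat_add {M : Type*} [AddCommMonoid M] [TopologicalSpace M]
    {f : ℤ → M} {N : ℤ} (hf : ∀ n < N, f n = 0) {s : M} :
    HasSum (fun k : ℕ => f (N + k)) s ↔ HasSum f s := by
  refine Function.Injective.hasSum_iff (f := f) (g := fun k : ℕ => N + k)
    (fun x y h => by simpa using h) fun n hn => hf n ?_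
  contrapose! hn
  exact ⟨(n - N).toNat, by simp only; omega⟩

theorem summable_int_iff_summable_nat_add {M : Type*} [AddCommMonoid M] [TopologicalSpace M]
    {f : ℤ → M} {N : ℤ} (hf : ∀ n < N, f n = 0) :
    Summable (fun k : ℕ => f (N + k)) ↔ Summable f :=
  exists_congr fun _ => hasSum_int_iff_hasSum_nat_add hf

section Coefficients

variable (z₁ z₂ : ℂ) (e₀ e₂ : ℤ) (J : ℕ)

theorem lhsSubstTerm_eq_zero_of_lt {n : ℤ} (hn : n < e₀ + e₂ + 1 + J) :
    lhsSubstTerm z₁ z₂ e₀ e₂ J n = 0 :=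
  if_neg (by omega)

theorem lhsSubstTerm_add_nat (hz₁ : z₁ ≠ 0) (k : ℕ) :
    lhsSubstTerm z₁ z₂ e₀ e₂ J (e₀ + e₂ + 1 + J + k) =
      z₁ ^ (-e₀ - e₂ - 2 - J) * ∑ j ∈ Finset.range (J + 1),
        Ring.choose ((-e₀ - 1 : ℤ) : ℂ) j * Ring.choose ((-e₂ - 1 : ℤ) : ℂ) (J - j) *
          (Ring.choose (((-e₂ - 1 : ℤ) : ℂ) - (J - j : ℕ)) k * (-z₂ / z₁) ^ k) := by
  have hk : (-e₂ - 1 - e₀ + (e₀ + e₂ + 1 + J + k) - J).toNat = k := by omega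
  rw [lhsSubstTerm, if_pos (by omega), hk, genChoose_eq_choose, genChoose_eq_choose]
  have hreflect : Ring.choose ((e₀ + e₂ + 1 + J + k : ℤ) : ℂ) J * (-1) ^ J =
      Ring.choose (((-e₀ - 1 : ℤ) : ℂ) + ((-e₂ - 1 : ℤ) : ℂ) - k) J := by
    rw [Ring.choose_mul_neg_one_pow]; push_cast; ring_nf
  have hpow : z₁ ^ (-(e₀ + e₂ + 1 + J + k) - 1) * (-z₂) ^ k =
      z₁ ^ (-e₀ - e₂ - 2 - J) * (-z₂ / z₁) ^ k := by
    rw [div_pow, mul_div, ← zpow_natCast z₁, div_eq_mul_inv, ← zpow_neg, mul_right_comm,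
      ← zpow_add₀ hz₁]
    ring_nf
  calc _ = Ring.choose ((e₀ + e₂ + 1 + J + k : ℤ) : ℂ) J * (-1) ^ J *
        Ring.choose ((-e₂ - 1 : ℤ) : ℂ) k * (z₁ ^ (-(e₀ + e₂ + 1 + J + k) - 1) * (-z₂) ^ k) := by
        ring
    _ = _ := by
      rw [hreflect, hpow, Ring.choose_add_sub_mul_choose, Finset.mul_sum, Finset.sum_mul]
      exact Finset.sum_congr rfl fun j _ => by ring

variable {z₁ z₂}

theorem hasSum_lhsSubstTerm_add_nat (h : ‖z₂‖ < ‖z₁‖) :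
    HasSum (fun k : ℕ => lhsSubstTerm z₁ z₂ e₀ e₂ J (e₀ + e₂ + 1 + J + k))
      (rhsSubstCoeff z₁ z₂ e₀ e₂ J) := by
  have hz₁ : z₁ ≠ 0 := norm_pos_iff.mp ((norm_nonneg _).trans_lt h)
  have hw : ‖-z₂ / z₁‖ < 1 := by
    rwa [norm_div, norm_neg, div_lt_one ((norm_nonneg _).trans_lt h)]
  simp_rw [lhsSubstTerm_add_nat z₁ z₂ e₀ e₂ J hz₁]
  suffices hval : rhsSubstCoeff z₁ z₂ e₀ e₂ J = z₁ ^ (-e₀ - e₂ - 2 - J) *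
      ∑ j ∈ Finset.range (J + 1),
        Ring.choose ((-e₀ - 1 : ℤ) : ℂ) j * Ring.choose ((-e₂ - 1 : ℤ) : ℂ) (J - j) *
          (1 + -z₂ / z₁) ^ (((-e₂ - 1 : ℤ) : ℂ) - (J - j : ℕ)) by
    rw [hval]
    exact (hasSum_sum fun j _ => (Complex.hasSum_choose_mul_pow _ hw).mul_left _).mul_left _
  rw [rhsSubstCoeff, Finset.mul_sum]
  refine Finset.sum_congr rfl fun j hj => ?_
  have hjJ : j ≤ J := Nat.lt_succ_iff.mp (Finset.mem_range.mp hj)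
  have hbase : 1 + -z₂ / z₁ = (z₁ - z₂) / z₁ := by field_simp; ring
  have hexp : ((-e₂ - 1 : ℤ) : ℂ) - (J - j : ℕ) = ((-e₂ - 1 - (J - j : ℕ) : ℤ) : ℂ) := by
    push_cast; ring
  have hz : z₁ ^ (-e₀ - e₂ - 2 - J) / z₁ ^ (-e₂ - 1 - ((J - j : ℕ) : ℤ)) =
      z₁ ^ (-e₀ - 1 - (j : ℤ)) := by
    rw [← zpow_sub₀ hz₁]; push_cast [Nat.cast_sub hjJ]; ring_nf
  rw [hexp, Complex.cpow_intCast, hbase, div_zpow, genChoose_eq_choose, genChoose_eq_choose, ← hz]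
  ring

theorem summable_norm_lhsSubstTerm_add_nat (h : ‖z₂‖ < ‖z₁‖) :
    Summable (fun k : ℕ => ‖lhsSubstTerm z₁ z₂ e₀ e₂ J (e₀ + e₂ + 1 + J + k)‖) := by
  have hz₁ : z₁ ≠ 0 := norm_pos_iff.mp ((norm_nonneg _).trans_lt h)
  have hw : ‖-z₂ / z₁‖ < 1 := by
    rwa [norm_div, norm_neg, div_lt_one ((norm_nonneg _).trans_lt h)]
  simp_rw [lhsSubstTerm_add_nat z₁ z₂ e₀ e₂ J hz₁, norm_mul]
  refine .mul_left _ (.of_nonneg_of_le (fun _ => norm_nonneg _) (fun k => norm_sum_le _ _)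
    (summable_sum fun j _ => ?_))
  simpa only [norm_mul] using (Complex.summable_norm_choose_mul_pow _ hw).mul_left
    (‖Ring.choose ((-e₀ - 1 : ℤ) : ℂ) j‖ * ‖Ring.choose ((-e₂ - 1 : ℤ) : ℂ) (J - j)‖)

end Coefficients

theorem stmt_10_general (z₁ z₂ : ℂ) (h₁₂ : ‖z₂‖ < ‖z₁‖) (e₀ e₂ : ℤ) (J : ℕ) :
    Summable (fun n : ℤ => ‖lhsSubstTerm z₁ z₂ e₀ e₂ J n‖) ∧
    HasSum (fun n : ℤ => lhsSubstTerm z₁ z₂ e₀ e₂ J n) (rhsSubstCoeff z₁ z₂ e₀ e₂ J) := by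
  have hvanish : ∀ n < e₀ + e₂ + 1 + J, lhsSubstTerm z₁ z₂ e₀ e₂ J n = 0 :=
    fun _ => lhsSubstTerm_eq_zero_of_lt z₁ z₂ e₀ e₂ J
  refine ⟨?_, (hasSum_int_iff_hasSum_nat_add hvanish).mp (hasSum_lhsSubstTerm_add_nat e₀ e₂ J h₁₂)⟩
  refine (summable_int_iff_summable_nat_add fun n hn => ?_).mp
    (summable_norm_lhsSubstTerm_add_nat e₀ e₂ J h₁₂)
  rw [hvanish n hn, norm_zero]

/-- for `|z₁| > |z₂| > 0` and `z₀ = z₁ - z₂`, the identity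
`z₁⁻¹δ((x₀ - x₁)/z₁) · x₂⁻¹δ((x₀ - z₂)/x₂) = x₀⁻¹δ((z₁ + x₁)/x₀) · x₂⁻¹δ((z₀ + x₁)/x₂)`
holds: the coefficient of each monomial `x₀^e₀ x₁^J x₂^e₂` on the left-hand side is an
absolutely convergent series whose sum equals the corresponding (finite-sum)
coefficient on the right-hand side. -/
theorem stmt_10 (z₁ z₂ : ℂ) (h₂ : 0 < ‖z₂‖) (h₁₂ : ‖z₂‖ < ‖z₁‖) (e₀ e₂ : ℤ) (J : ℕ) :
    Summable (fun n : ℤ => ‖lhsSubstTerm z₁ z₂ e₀ e₂ J n‖) ∧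
    HasSum (fun n : ℤ => lhsSubstTerm z₁ z₂ e₀ e₂ J n) (rhsSubstCoeff z₁ z₂ e₀ e₂ J) :=
  stmt_10_general z₁ z₂ h₁₂ e₀ e₂ J
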